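/- Let W be a symmetric n×n matrix with nonnegative entries, a ∈ ℝⁿ with aᵢ > 0, fᵢ : ℝ → ℝ differentiable convex, μ₁ ∈ (0,1), μ₂ > 1. Along the accelerated dynamics ẋᵢ = -(1/aᵢ) Σⱼ Wᵢⱼ [sgn(dᵢⱼ) + sgn^{μ₁}(dᵢⱼ) + sgn^{μ₂}(dᵢⱼ)] with dᵢⱼ = fᵢ'(xᵢ)/aᵢ - fⱼ'(xⱼ)/aⱼ, one has d/dt F(x(t)) ≤ 0, where F(x) = Σᵢ fᵢ(xᵢ). Moreover d/dt F(x(t)) = 0 at time t if and only if dᵢⱼ = 0 for all i,j with Wᵢⱼ > 0. -/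

import Mathlib

/-! With `cᵢ = fᵢ'(xᵢ)/aᵢ` and `g(u) = sgn u + sgn^{μ₁} u + sgn^{μ₂} u`, the chain rule gives
`d/dt F(x(t)) = -∑ᵢ cᵢ ∑ⱼ Wᵢⱼ g(cᵢ - cⱼ)`. Since `W` is symmetric and `g` is odd, averaging this sum
with its `i ↔ j` transpose gives `-(1/2) ∑ᵢⱼ Wᵢⱼ dᵢⱼ g(dᵢⱼ)`, and every term `Wᵢⱼ dᵢⱼ g(dᵢⱼ)` is
nonnegative, vanishing exactly when `Wᵢⱼ = 0` or `dᵢⱼ = 0`. -/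

open Finset

noncomputable def sgnPow (μ x : ℝ) : ℝ := x * |x| ^ (μ - 1)

lemma sgnPow_neg (μ x : ℝ) : sgnPow μ (-x) = -sgnPow μ x := by
  simp only [sgnPow, abs_neg, neg_mul]

lemma mul_sgnPow_nonneg (μ x : ℝ) : 0 ≤ x * sgnPow μ x := by
  rw [sgnPow, ← mul_assoc]
  exact mul_nonneg (mul_self_nonneg x) (Real.rpow_nonneg (abs_nonneg x) _)

noncomputable def accelSign (μ₁ μ₂ u : ℝ) : ℝ := Real.sign u + sgnPow μ₁ u + sgnPow μ₂ u

lemma accelSign_neg (μ₁ μ₂ u : ℝ) : accelSign μ₁ μ₂ (-u) = -accelSign μ₁ μ₂ u := by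
  simp only [accelSign, Real.sign_neg, sgnPow_neg]
  ring

lemma mul_accelSign_nonneg (μ₁ μ₂ u : ℝ) : 0 ≤ u * accelSign μ₁ μ₂ u := by
  have := mul_sgnPow_nonneg μ₁ u
  have := mul_sgnPow_nonneg μ₂ u
  have := Real.sign_mul_nonneg u
  rw [accelSign]
  nlinarith

lemma mul_accelSign_eq_zero_iff (μ₁ μ₂ u : ℝ) : u * accelSign μ₁ μ₂ u = 0 ↔ u = 0 := by
  refine ⟨fun h => by_contra fun hu => ?_, fun hu => by rw [hu, zero_mul]⟩
  have := mul_sgnPow_nonneg μ₁ u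
  have := mul_sgnPow_nonneg μ₂ u
  have := Real.sign_mul_pos_of_ne_zero u hu
  rw [accelSign] at h
  nlinarith

section Consensus

variable {ι : Type*} [Fintype ι] {W : ι → ι → ℝ}

/-- Symmetrisation: swapping `i` and `j` in the double sum flips the sign of an odd feedback. -/
theorem sum_mul_sum_odd_eq_half (hW : ∀ i j, W i j = W j i) {φ : ℝ → ℝ}
    (hφ : ∀ u, φ (-u) = -φ u) (c : ι → ℝ) :
    ∑ i, c i * ∑ j, W i j * φ (c i - c j) =
      1 / 2 * ∑ i, ∑ j, W i j * ((c i - c j) * φ (c i - c j)) := by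
  have hfactor : ∑ i, c i * ∑ j, W i j * φ (c i - c j) =
      ∑ i, ∑ j, W i j * (c i * φ (c i - c j)) :=
    Finset.sum_congr rfl fun i _ => by
      rw [Finset.mul_sum]
      exact Finset.sum_congr rfl fun j _ => by ring
  have hsplit : ∑ i, ∑ j, W i j * ((c i - c j) * φ (c i - c j)) =
      ∑ i, ∑ j, W i j * (c i * φ (c i - c j)) - ∑ i, ∑ j, W i j * (c j * φ (c i - c j)) := by
    simp only [← Finset.sum_sub_distrib, sub_mul, mul_sub]
  have hswap : ∑ i, ∑ j, W i j * (c j * φ (c i - c j)) =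
      -∑ i, ∑ j, W i j * (c i * φ (c i - c j)) := by
    rw [Finset.sum_comm, ← Finset.sum_neg_distrib]
    refine Finset.sum_congr rfl fun i _ => ?_
    rw [← Finset.sum_neg_distrib]
    refine Finset.sum_congr rfl fun j _ => ?_
    rw [hW j i, ← neg_sub, hφ]
    ring
  rw [hfactor, hsplit, hswap]
  ring

theorem sum_sum_mul_nonneg (hW : ∀ i j, 0 ≤ W i j) {φ : ℝ → ℝ} (hφ : ∀ u, 0 ≤ u * φ u)
    (d : ι → ι → ℝ) : 0 ≤ ∑ i, ∑ j, W i j * (d i j * φ (d i j)) :=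
  Finset.sum_nonneg fun i _ => Finset.sum_nonneg fun j _ => mul_nonneg (hW i j) (hφ _)

theorem sum_sum_mul_eq_zero_iff (hW : ∀ i j, 0 ≤ W i j) {φ : ℝ → ℝ}
    (hφ : ∀ u, 0 ≤ u * φ u) (hφ₀ : ∀ u, u * φ u = 0 ↔ u = 0) (d : ι → ι → ℝ) :
    ∑ i, ∑ j, W i j * (d i j * φ (d i j)) = 0 ↔ ∀ i j, 0 < W i j → d i j = 0 := by
  have hterm : ∀ i j, 0 ≤ W i j * (d i j * φ (d i j)) := fun i j => mul_nonneg (hW i j) (hφ _)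
  rw [Finset.sum_eq_zero_iff_of_nonneg fun i _ => Finset.sum_nonneg fun j _ => hterm i j]
  refine forall_congr' fun i => ?_
  rw [Finset.sum_eq_zero_iff_of_nonneg fun j _ => hterm i j]
  simp only [Finset.mem_univ, true_implies, mul_eq_zero, hφ₀]
  refine forall_congr' fun j => ⟨fun h hpos => h.resolve_left hpos.ne', fun h => ?_⟩
  rcases (hW i j).lt_or_eq with hpos | hzero
  · exact Or.inr (h hpos)
  · exact Or.inl hzero.symm

end Consensus

theorem stmt_9_general (n : ℕ) (W : Fin n → Fin n → ℝ)
    (hWsym : ∀ i j, W i j = W j i) (hWpos : ∀ i j, 0 ≤ W i j)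
    (a : Fin n → ℝ)
    (μ₁ μ₂ : ℝ)
    (f : Fin n → ℝ → ℝ) (hdiff : ∀ i, Differentiable ℝ (f i))
    (x : ℝ → Fin n → ℝ)
    (d : ℝ → Fin n → Fin n → ℝ)
    (hd : ∀ t i j, d t i j = deriv (f i) (x t i) / a i - deriv (f j) (x t j) / a j)
    (hdyn : ∀ i t, HasDerivAt (fun s => x s i)
      (-(1 / a i) * ∑ j, W i j *
        (Real.sign (d t i j) + sgnPow μ₁ (d t i j) + sgnPow μ₂ (d t i j))) t) :
    ∀ t, HasDerivAt (fun s => ∑ i, f i (x s i))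
        (-(1/2) * ∑ i, ∑ j, W i j * (d t i j *
          (Real.sign (d t i j) + sgnPow μ₁ (d t i j) + sgnPow μ₂ (d t i j)))) t ∧
      (-(1/2) * ∑ i, ∑ j, W i j * (d t i j *
          (Real.sign (d t i j) + sgnPow μ₁ (d t i j) + sgnPow μ₂ (d t i j)))) ≤ 0 ∧
      ((-(1/2) * ∑ i, ∑ j, W i j * (d t i j *
          (Real.sign (d t i j) + sgnPow μ₁ (d t i j) + sgnPow μ₂ (d t i j)))) = 0 ↔
        ∀ i j, 0 < W i j → d t i j = 0) := by
  intro t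
  set c : Fin n → ℝ := fun i => deriv (f i) (x t i) / a i
  have hdc : ∀ i j, d t i j = c i - c j := hd t
  have hchain : HasDerivAt (fun s => ∑ i, f i (x s i))
      (∑ i, deriv (f i) (x t i) * (-(1 / a i) * ∑ j, W i j * accelSign μ₁ μ₂ (d t i j))) t :=
    HasDerivAt.fun_sum fun i _ => ((hdiff i) (x t i)).hasDerivAt.comp t (hdyn i t)
  have hvalue : ∑ i, deriv (f i) (x t i) * (-(1 / a i) * ∑ j, W i j * accelSign μ₁ μ₂ (d t i j))
      = -(1/2) * ∑ i, ∑ j, W i j * (d t i j * accelSign μ₁ μ₂ (d t i j)) := by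
    simp only [hdc]
    rw [neg_mul, ← sum_mul_sum_odd_eq_half hWsym (accelSign_neg μ₁ μ₂) c, ← Finset.sum_neg_distrib]
    refine Finset.sum_congr rfl fun i _ => ?_
    ring
  refine ⟨hchain.congr_deriv hvalue, ?_, ?_⟩
  · exact mul_nonpos_of_nonpos_of_nonneg (by norm_num)
      (sum_sum_mul_nonneg hWpos (mul_accelSign_nonneg μ₁ μ₂) (d t))
  · rw [mul_eq_zero, or_iff_right (by norm_num)]
    exact sum_sum_mul_eq_zero_iff hWpos (mul_accelSign_nonneg μ₁ μ₂)
      (mul_accelSign_eq_zero_iff μ₁ μ₂) (d t)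

theorem stmt_9 (n : ℕ) (W : Fin n → Fin n → ℝ)
    (hWsym : ∀ i j, W i j = W j i) (hWpos : ∀ i j, 0 ≤ W i j)
    (a : Fin n → ℝ) (ha : ∀ i, 0 < a i)
    (μ₁ μ₂ : ℝ) (hμ₁ : 0 < μ₁ ∧ μ₁ < 1) (hμ₂ : 1 < μ₂)
    (f : Fin n → ℝ → ℝ) (hdiff : ∀ i, Differentiable ℝ (f i))
    (hconv : ∀ i, ConvexOn ℝ Set.univ (f i))
    (x : ℝ → Fin n → ℝ)
    (d : ℝ → Fin n → Fin n → ℝ)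
    (hd : ∀ t i j, d t i j = deriv (f i) (x t i) / a i - deriv (f j) (x t j) / a j)
    (hdyn : ∀ i t, HasDerivAt (fun s => x s i)
      (-(1 / a i) * ∑ j, W i j *
        (Real.sign (d t i j) + sgnPow μ₁ (d t i j) + sgnPow μ₂ (d t i j))) t) :
    ∀ t, HasDerivAt (fun s => ∑ i, f i (x s i))
        (-(1/2) * ∑ i, ∑ j, W i j * (d t i j *
          (Real.sign (d t i j) + sgnPow μ₁ (d t i j) + sgnPow μ₂ (d t i j)))) t ∧
      (-(1/2) * ∑ i, ∑ j, W i j * (d t i j *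
          (Real.sign (d t i j) + sgnPow μ₁ (d t i j) + sgnPow μ₂ (d t i j)))) ≤ 0 ∧
      ((-(1/2) * ∑ i, ∑ j, W i j * (d t i j *
          (Real.sign (d t i j) + sgnPow μ₁ (d t i j) + sgnPow μ₂ (d t i j)))) = 0 ↔
        ∀ i j, 0 < W i j → d t i j = 0) :=
  stmt_9_general n W hWsym hWpos a μ₁ μ₂ f hdiff x d hd hdyn
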